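/- arXiv:0803.4386 — 2 statements merged into one kernel-verified Lean document; each statement's English description precedes it below -/
import Mathlib

section
/- With the lexicographic edge order on K_n and the notion of G-active edges as above, an edge e of K_n is G-active if and only if e is Ψ(G)-active, for every connected graph G on [n]. -/
open scoped Classical

noncomputable section

/-- The lexicographic key of the edge `{a, b}` of the complete graph on `Fin n`:
the pair `(min a b, max a b)` with the lexicographic order. -/
def edgeKey {n : ℕ} (a b : Fin n) : Fin n ×ₗ Fin n := toLex (min a b, max a b)

/-- The spanning subgraph `G^{>e}` of `G` consisting of the edges strictly greater
than `e` in the lexicographic order. -/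
def aboveEdge {n : ℕ} (G : SimpleGraph (Fin n)) (e : Fin n ×ₗ Fin n) :
    SimpleGraph (Fin n) where
  Adj a b := G.Adj a b ∧ e < edgeKey a b
  symm := by
    refine ⟨?_⟩
    intro a b hab
    refine ⟨hab.1.symm, ?_⟩
    have : edgeKey a b = edgeKey b a := by
      unfold edgeKey; rw [min_comm a b, max_comm a b]
    rw [← this]; exact hab.2
  loopless := ⟨fun a ha => G.loopless.irrefl a ha.1⟩

/-- An edge `e = (i, j)` of `K_n` (with `i < j`) is `G`-active if `i` and `j` are joined
by a path in `G^{>e}`. -/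
def IsActive {n : ℕ} (G : SimpleGraph (Fin n)) (e : Fin n ×ₗ Fin n) : Prop :=
  (ofLex e).1 < (ofLex e).2 ∧ (aboveEdge G e).Reachable (ofLex e).1 (ofLex e).2

instance {n : ℕ} : Fintype (Fin n ×ₗ Fin n) := Fintype.ofEquiv (Fin n × Fin n) toLex

/-- The finset of `G`-active edges. -/
def activeEdges {n : ℕ} (G : SimpleGraph (Fin n)) : Finset (Fin n ×ₗ Fin n) :=
  Finset.univ.filter (IsActive G)

/-- `G ⊕ e`: toggle the edge `e` (delete it if present, add it otherwise). -/
def toggleEdge {n : ℕ} (G : SimpleGraph (Fin n)) (e : Fin n ×ₗ Fin n) :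
    SimpleGraph (Fin n) :=
  if G.Adj (ofLex e).1 (ofLex e).2 then G.deleteEdges {s((ofLex e).1, (ofLex e).2)}
  else G ⊔ SimpleGraph.fromEdgeSet {s((ofLex e).1, (ofLex e).2)}

/-- The map `Ψ`: toggle the least `G`-active edge, if any. -/
def Psi {n : ℕ} (G : SimpleGraph (Fin n)) : SimpleGraph (Fin n) :=
  if h : (activeEdges G).Nonempty then toggleEdge G ((activeEdges G).min' h) else G

end

/-! Toggling an active edge `f = {i, j}` changes no truncation `G^{>e}` with `e ≥ f`, since
`f` lies below all of their edges. For `e < f`, the path joining `i` and `j` in `G^{>f}` survives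
in `G^{>e}` before and after the toggle, so toggling `f` does not change reachability in
`G^{>e}`. Hence `G` and `G ⊕ f` have the same active edges; `Ψ` toggles such an edge. -/

namespace SimpleGraph

variable {V : Type*} {A B : SimpleGraph V}

theorem reachable_le_of_adj_le_reachable (h : A.Adj ≤ B.Reachable) :
    A.Reachable ≤ B.Reachable := by
  rw [reachable_eq_reflTransGen, reachable_eq_reflTransGen] at *
  exact Relation.reflTransGen_closed h

theorem reachable_le_of_adj_imp_off_edge {u v : V}
    (hAB : ∀ x y, s(x, y) ≠ s(u, v) → A.Adj x y → B.Adj x y) (hB : B.Reachable u v) :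
    A.Reachable ≤ B.Reachable := by
  refine reachable_le_of_adj_le_reachable fun x y hxy => ?_
  by_cases hs : s(x, y) = s(u, v)
  · rcases Sym2.eq_iff.mp hs with ⟨rfl, rfl⟩ | ⟨rfl, rfl⟩
    exacts [hB, hB.symm]
  · exact (hAB x y hs hxy).reachable

theorem reachable_eq_of_adj_iff_off_edge {u v : V}
    (hAB : ∀ x y, s(x, y) ≠ s(u, v) → (A.Adj x y ↔ B.Adj x y))
    (hA : A.Reachable u v) (hB : B.Reachable u v) : A.Reachable = B.Reachable :=
  le_antisymm (reachable_le_of_adj_imp_off_edge (fun x y hs => (hAB x y hs).mp) hB)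
    (reachable_le_of_adj_imp_off_edge (fun x y hs => (hAB x y hs).mpr) hA)

end SimpleGraph

section ActiveEdges

variable {n : ℕ}

theorem edgeKey_eq_iff {a b c d : Fin n} : edgeKey a b = edgeKey c d ↔ s(a, b) = s(c, d) := by
  have sym2_eq_min_max (x y : Fin n) : s(x, y) = s(min x y, max x y) := by
    rcases le_total x y with h | h
    · rw [min_eq_left h, max_eq_right h]
    · rw [min_eq_right h, max_eq_left h, Sym2.eq_swap]
  constructor
  · intro h
    obtain ⟨hmin, hmax⟩ := Prod.mk_inj.mp (toLex.injective h)
    rw [sym2_eq_min_max a b, sym2_eq_min_max c d, hmin, hmax]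
  · intro h
    rcases Sym2.eq_iff.mp h with ⟨rfl, rfl⟩ | ⟨rfl, rfl⟩
    · rfl
    · rw [edgeKey, edgeKey, min_comm, max_comm]

theorem edgeKey_ofLex {f : Fin n ×ₗ Fin n} (hf : (ofLex f).1 < (ofLex f).2) :
    edgeKey (ofLex f).1 (ofLex f).2 = f := by
  rw [edgeKey, min_eq_left hf.le, max_eq_right hf.le, Prod.mk.eta, toLex_ofLex]

theorem toggleEdge_adj_of_edgeKey_ne (G : SimpleGraph (Fin n)) {f : Fin n ×ₗ Fin n}
    (hf : (ofLex f).1 < (ofLex f).2) {a b : Fin n} (h : edgeKey a b ≠ f) :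
    (toggleEdge G f).Adj a b ↔ G.Adj a b := by
  have hs : s(a, b) ≠ s((ofLex f).1, (ofLex f).2) := by
    rwa [ne_eq, ← edgeKey_eq_iff, edgeKey_ofLex hf]
  unfold toggleEdge
  split_ifs <;> simp [hs]

theorem aboveEdge_toggleEdge_adj_iff (G : SimpleGraph (Fin n)) {e f : Fin n ×ₗ Fin n}
    (hf : (ofLex f).1 < (ofLex f).2) {a b : Fin n} (h : edgeKey a b ≠ f) :
    (aboveEdge (toggleEdge G f) e).Adj a b ↔ (aboveEdge G e).Adj a b :=
  and_congr_left' (toggleEdge_adj_of_edgeKey_ne G hf h)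

theorem aboveEdge_anti (G : SimpleGraph (Fin n)) : Antitone (aboveEdge G) :=
  fun _ _ hee' _ _ hab => ⟨hab.1, hee'.trans_lt hab.2⟩

theorem aboveEdge_toggleEdge_of_le (G : SimpleGraph (Fin n)) {e f : Fin n ×ₗ Fin n}
    (hf : (ofLex f).1 < (ofLex f).2) (hfe : f ≤ e) :
    aboveEdge (toggleEdge G f) e = aboveEdge G e := by
  ext a b
  exact ⟨fun hab => (aboveEdge_toggleEdge_adj_iff G hf (hfe.trans_lt hab.2).ne').mp hab,
    fun hab => (aboveEdge_toggleEdge_adj_iff G hf (hfe.trans_lt hab.2).ne').mpr hab⟩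

theorem aboveEdge_le_aboveEdge_toggleEdge (G : SimpleGraph (Fin n)) {e f : Fin n ×ₗ Fin n}
    (hf : (ofLex f).1 < (ofLex f).2) (hef : e < f) :
    aboveEdge G f ≤ aboveEdge (toggleEdge G f) e := fun _ _ hab =>
  (aboveEdge_toggleEdge_adj_iff G hf hab.2.ne').mpr (aboveEdge_anti G hef.le hab)

theorem isActive_toggleEdge_iff {G : SimpleGraph (Fin n)} {f : Fin n ×ₗ Fin n}
    (hf : IsActive G f) (e : Fin n ×ₗ Fin n) :
    IsActive (toggleEdge G f) e ↔ IsActive G e := by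
  obtain ⟨hij, hreach⟩ := hf
  rcases lt_or_ge e f with hef | hfe
  · have hAB := SimpleGraph.reachable_eq_of_adj_iff_off_edge
      (fun x y hs => aboveEdge_toggleEdge_adj_iff G (e := e) hij
        (by rwa [ne_eq, ← edgeKey_ofLex hij, edgeKey_eq_iff]))
      (hreach.mono (aboveEdge_le_aboveEdge_toggleEdge G hij hef))
      (hreach.mono (aboveEdge_anti G hef.le))
    rw [IsActive, IsActive, hAB]
  · rw [IsActive, IsActive, aboveEdge_toggleEdge_of_le G hij hfe]

end ActiveEdges

theorem active_iff_active_psi_general {n : ℕ} (G : SimpleGraph (Fin n))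
    (e : Fin n ×ₗ Fin n) : IsActive G e ↔ IsActive (Psi G) e := by
  unfold Psi
  split_ifs with h
  · exact (isActive_toggleEdge_iff (Finset.mem_filter.mp ((activeEdges G).min'_mem h)).2 e).symm
  · rfl

/-- For every connected graph `G` on `[n]`, an edge of `K_n` is `G`-active if and only if
it is `Ψ(G)`-active. -/
theorem active_iff_active_psi {n : ℕ} (G : SimpleGraph (Fin n)) (hG : G.Connected)
    (e : Fin n ×ₗ Fin n) : IsActive G e ↔ IsActive (Psi G) e :=
  active_iff_active_psi_general G e
end

section
/- Every rooted Cayley tree T on vertex set {0,...,n} with root i_0 is h-increasing for exactly one vector h ∈ Z^n satisfying h̄_{i_0} = min_{0 ≤ i ≤ n} h̄_i, where h̄_i = h_i + i/(n+1) and h_0 = 0. Explicitly, this h is given by: h_i - h_{i_0} equals the number of descents along the path in T from i_0 to i (a descent in the label sequence i_0, i_1, ..., i_s is an index r < s with i_{r+1} < i_r), together with h_0 = 0. -/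
open scoped Classical
open MeasureTheory

noncomputable section

def extv {α : Type*} [Zero α] {n : ℕ} (x : Fin n → α) : Fin (n + 1) → α :=
  Fin.cases 0 x

/-- The centroid `h̄` of `h ∈ ℤ^n`: `h̄_i = h_i + i/(n+1)`, with the convention `h_0 = 0`. -/
def cent (n : ℕ) (h : Fin n → ℤ) : Fin (n + 1) → ℝ :=
  fun i => (extv h i : ℤ) + (i : ℝ) / (n + 1)

/-- The graph `G_h` on `{0, …, n}` whose edges are the pairs `(i,j)` with `|h̄_i - h̄_j| < 1`. -/
def Gh (n : ℕ) (h : Fin n → ℤ) : SimpleGraph (Fin (n + 1)) where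
  Adj i j := i ≠ j ∧ |cent n h i - cent n h j| < 1
  symm := ⟨fun i j hij => ⟨hij.1.symm, by rw [abs_sub_comm]; exact hij.2⟩⟩
  loopless := ⟨fun i hi => hi.1 rfl⟩

/-- The key of the pair `(i, j)`: the pair `(min(h̄_i, h̄_j), max(h̄_i, h̄_j))` with the
lexicographic order, along which edges of `G_h` are ordered. -/
def keyC (n : ℕ) (h : Fin n → ℤ) (p : Fin (n + 1) × Fin (n + 1)) : ℝ ×ₗ ℝ :=
  toLex (min (cent n h p.1) (cent n h p.2), max (cent n h p.1) (cent n h p.2))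

/-- The subgraph of `G` consisting of the edges strictly greater than `e`. -/
def aboveC (n : ℕ) (h : Fin n → ℤ) (G : SimpleGraph (Fin (n + 1)))
    (e : Fin (n + 1) × Fin (n + 1)) : SimpleGraph (Fin (n + 1)) where
  Adj a b := G.Adj a b ∧ keyC n h e < keyC n h (a, b)
  symm := ⟨by
    intro a b hab
    refine ⟨hab.1.symm, ?_⟩
    have hk : keyC n h (a, b) = keyC n h (b, a) := by
      simp only [keyC]; rw [min_comm (cent n h a), max_comm (cent n h a)]
    rw [← hk]; exact hab.2⟩
  loopless := ⟨fun a ha => G.loopless.irrefl a ha.1⟩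

/-- An edge `e = (i, j)` of `G_h` (normalized so that `h̄_i < h̄_j`) is `(G, h)`-active if
`i` and `j` are joined by a path among the edges of `G` strictly greater than `e`. -/
def IsActiveC (n : ℕ) (h : Fin n → ℤ) (G : SimpleGraph (Fin (n + 1)))
    (e : Fin (n + 1) × Fin (n + 1)) : Prop :=
  cent n h e.1 < cent n h e.2 ∧ (Gh n h).Adj e.1 e.2 ∧ (aboveC n h G e).Reachable e.1 e.2

/-- The finset of `(G, h)`-active edges. -/
def activeC (n : ℕ) (h : Fin n → ℤ) (G : SimpleGraph (Fin (n + 1))) :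
    Finset (Fin (n + 1) × Fin (n + 1)) :=
  Finset.univ.filter (IsActiveC n h G)

/-- `G ⊕ e`: toggle the edge `e` (delete it if present, add it otherwise). -/
def toggleC {n : ℕ} (G : SimpleGraph (Fin (n + 1))) (e : Fin (n + 1) × Fin (n + 1)) :
    SimpleGraph (Fin (n + 1)) :=
  if G.Adj e.1 e.2 then G.deleteEdges {s(e.1, e.2)}
  else G ⊔ SimpleGraph.fromEdgeSet {s(e.1, e.2)}

/-- The map `Ψ_h`: toggle the least `(G, h)`-active edge, if any. -/
def PsiH (n : ℕ) (h : Fin n → ℤ) (G : SimpleGraph (Fin (n + 1))) :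
    SimpleGraph (Fin (n + 1)) :=
  if hne : (activeC n h G).Nonempty then
    toggleC G (Finset.exists_min_image (activeC n h G) (keyC n h) hne).choose
  else G

/-- The index `i_0` of the least coordinate of the centroid `h̄`. -/
def idxMin (n : ℕ) (h : Fin n → ℤ) : Fin (n + 1) :=
  (Finite.exists_min (cent n h)).choose

/-- An `h`-increasing tree on `{0, …, n}`: a spanning tree of `G_h` such that `h̄` strictly
increases along every simple path starting at the vertex `i_0` minimizing `h̄`. -/
def IsIncTree (n : ℕ) (h : Fin n → ℤ) (T : SimpleGraph (Fin (n + 1))) : Prop :=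
  T.IsTree ∧ T ≤ Gh n h ∧
    ∀ (v : Fin (n + 1)) (p : T.Walk (idxMin n h) v), p.IsPath →
      List.Chain' (fun a b => cent n h a < cent n h b) p.support

end

/-!
By the key fact, `h` makes `T` increasing from `r` exactly when `h_j = h_i + [j < i]` for every
edge `ij` of `T` directed away from `r`. Summing along the tree path, this says that `h_v - h_r`
is the number of descents on the path from `r` to `v`; with `h_0 = 0` that determines `h`, and
conversely it defines an `h` for which `T` is increasing. Minimality of `h̄_r` is then automatic,
since `h̄` increases along every path leaving `r`.
-/

open SimpleGraph

lemma int_add_mem_Ioo_zero_one_iff {k : ℤ} {x : ℝ} (hx : x ∈ Set.Ioo 0 1) :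
    k + x ∈ Set.Ioo (0 : ℝ) 1 ↔ k = 0 := by
  obtain ⟨hx0, hx1⟩ := hx
  refine ⟨fun ⟨h0, h1⟩ => ?_, fun hk => by simpa [hk] using ⟨hx0, hx1⟩⟩
  have hlo : (-1 : ℝ) < k := by linarith
  have hhi : (k : ℝ) < 1 := by linarith
  have : (-1 : ℤ) < k ∧ k < 1 := ⟨by exact_mod_cast hlo, by exact_mod_cast hhi⟩
  omega

lemma cent_sub_cent_mem_Ioo_iff {n : ℕ} (h : Fin n → ℤ) {i j : Fin (n + 1)} (hij : i ≠ j) :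
    cent n h j - cent n h i ∈ Set.Ioo 0 1 ↔ extv h j = extv h i + if j < i then 1 else 0 := by
  have hi : (i : ℝ) < n + 1 := by exact_mod_cast i.isLt
  have hj : (j : ℝ) < n + 1 := by exact_mod_cast j.isLt
  have hn : (0 : ℝ) < n + 1 := by positivity
  have hi0 : (0 : ℝ) ≤ i := by positivity
  have hj0 : (0 : ℝ) ≤ j := by positivity
  -- `h̄_j - h̄_i = (h_j - h_i - [j < i]) + ([j < i] + δ)`, the last summand lying in `(0, 1)`
  set δ : ℝ := ((j : ℝ) - i) / (n + 1)
  have hδ : δ ∈ Set.Ioo (-1) 1 := by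
    constructor
    · rw [lt_div_iff₀ hn]; linarith
    · rw [div_lt_one hn]; linarith
  rcases hij.lt_or_gt with hlt | hlt
  · have hδ0 : 0 < δ := div_pos (by simpa using hlt) hn
    rw [if_neg hlt.not_gt, add_zero, ← sub_eq_zero,
      ← int_add_mem_Ioo_zero_one_iff (x := δ) ⟨hδ0, hδ.2⟩]
    simp only [cent, δ]; push_cast; ring_nf
  · have hδ0 : δ < 0 := div_neg_of_neg_of_pos (by simpa using hlt) hn
    rw [if_pos hlt, ← sub_eq_zero, show ∀ a b : ℤ, a - (b + 1) = a - b - 1 by intros; ring,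
      ← int_add_mem_Ioo_zero_one_iff (x := 1 + δ) ⟨by linarith [hδ.1], by linarith⟩]
    simp only [cent, δ]; push_cast; ring_nf

namespace SimpleGraph.Walk

variable {V : Type*} {G : SimpleGraph V}

lemma isChain_support_iff_forall_darts (R : V → V → Prop) {u v : V} (p : G.Walk u v) :
    p.support.IsChain R ↔ ∀ d ∈ p.darts, R d.fst d.snd := by
  induction p with
  | nil => simp
  | cons e q ih =>
    rw [support_cons, ← cons_tail_support q, List.isChain_cons_cons, cons_tail_support q, ih,
      darts_cons, List.forall_mem_cons]

lemma le_of_forall_darts_lt {α : Type*} [Preorder α] (f : V → α) {u v : V} (p : G.Walk u v)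
    (hp : ∀ d ∈ p.darts, f d.fst < f d.snd) : f u ≤ f v := by
  induction p with
  | nil => rfl
  | cons e q ih =>
    simp only [darts_cons, List.forall_mem_cons] at hp
    exact hp.1.le.trans (ih hp.2)

variable [LinearOrder V]

def descents {u v : V} (p : G.Walk u v) : ℕ :=
  p.darts.countP fun d => d.snd < d.fst

@[simp] lemma descents_nil {u : V} : (nil : G.Walk u u).descents = 0 := rfl

lemma descents_cons {u v w : V} (e : G.Adj u v) (p : G.Walk v w) :
    (cons e p).descents = p.descents + if v < u then 1 else 0 := by
  simp [descents, List.countP_cons]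

lemma descents_concat {u v w : V} (p : G.Walk u v) (e : G.Adj v w) :
    (p.concat e).descents = p.descents + if w < v then 1 else 0 := by
  simp [descents, darts_concat, List.countP_append]

lemma eq_add_descents_of_forall_darts (f : V → ℤ) {u v : V} (p : G.Walk u v)
    (hf : ∀ d ∈ p.darts, f d.snd = f d.fst + if d.snd < d.fst then 1 else 0) :
    f v = f u + p.descents := by
  induction p with
  | nil => simp
  | cons e q ih =>
    simp only [darts_cons, List.forall_mem_cons] at hf
    rw [ih hf.2, descents_cons, hf.1]
    push_cast
    ring

end SimpleGraph.Walk

namespace SimpleGraph.IsTree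

open Walk

variable {V : Type*} {T : SimpleGraph V}

lemma exists_isPath_mem_darts (hT : T.IsTree) (r : V) {a b : V} (hab : T.Adj a b) :
    ∃ (v : V) (p : T.Walk r v), p.IsPath ∧ ∃ d ∈ p.darts, d.edge = s(a, b) := by
  obtain ⟨p, hp, -⟩ := hT.existsUnique_path r a
  by_cases hb : b ∈ p.support
  · -- the path from `b` to `a` inside `p` can only be the edge `ba`
    have hdrop : p.dropUntil b hb = cons hab.symm nil :=
      (hT.existsUnique_path b a).unique (hp.dropUntil hb) (by simp [hab.ne'])
    refine ⟨a, p, hp, ⟨(b, a), hab.symm⟩, ?_, Sym2.eq_swap⟩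
    exact p.darts_dropUntil_subset_darts hb (by simp [hdrop])
  · exact ⟨b, p.concat hab, hp.concat hb hab, ⟨(a, b), hab⟩, by simp [darts_concat], rfl⟩

variable [LinearOrder V]

noncomputable def rootDescents (hT : T.IsTree) (r v : V) : ℕ :=
  (hT.existsUnique_path r v).exists.choose.descents

lemma descents_eq_rootDescents (hT : T.IsTree) {r v : V} {p : T.Walk r v} (hp : p.IsPath) :
    p.descents = hT.rootDescents r v := by
  rw [rootDescents, (hT.existsUnique_path r v).unique hp
    (hT.existsUnique_path r v).exists.choose_spec]

lemma rootDescents_self (hT : T.IsTree) (r : V) : hT.rootDescents r r = 0 :=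
  (hT.descents_eq_rootDescents IsPath.nil).symm

lemma rootDescents_snd_of_mem_darts (hT : T.IsTree) {r v : V} {p : T.Walk r v}
    (hp : p.IsPath) {d : T.Dart} (hd : d ∈ p.darts) :
    (hT.rootDescents r d.snd : ℤ) = hT.rootDescents r d.fst + if d.snd < d.fst then 1 else 0 := by
  induction p using concatRec with
  | Hnil => simp at hd
  | Hconcat q e ih =>
    have hq := ((concat_isPath_iff e).mp hp).1
    rw [darts_concat, List.concat_eq_append, List.mem_append, List.mem_singleton] at hd
    rcases hd with hd | rfl
    · exact ih hq hd
    · rw [← hT.descents_eq_rootDescents hp, ← hT.descents_eq_rootDescents hq, descents_concat]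
      push_cast
      rfl

end SimpleGraph.IsTree

section IncreasingTree

variable {n : ℕ} {T : SimpleGraph (Fin (n + 1))} (hT : T.IsTree) {r : Fin (n + 1)}
  {h : Fin n → ℤ}

lemma extv_eq_add_rootDescents_of_increasing (hsub : T ≤ Gh n h)
    (hinc : ∀ (v : Fin (n + 1)) (p : T.Walk r v), p.IsPath →
      p.support.IsChain fun a b => cent n h a < cent n h b) (v : Fin (n + 1)) :
    extv h v = extv h r + hT.rootDescents r v := by
  obtain ⟨p, hp, -⟩ := hT.existsUnique_path r v
  rw [← hT.descents_eq_rootDescents hp]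
  refine p.eq_add_descents_of_forall_darts _ fun d hd => ?_
  rw [← cent_sub_cent_mem_Ioo_iff h d.fst_ne_snd]
  have hlt := (p.isChain_support_iff_forall_darts _).mp (hinc v p hp) d hd
  have hnear := abs_sub_lt_iff.mp (hsub d.adj).2
  exact ⟨by linarith, by linarith⟩

lemma increasing_of_extv_eq_add_rootDescents
    (hext : ∀ v, extv h v = extv h r + hT.rootDescents r v) :
    T ≤ Gh n h ∧ ∀ (v : Fin (n + 1)) (p : T.Walk r v), p.IsPath →
      p.support.IsChain fun a b => cent n h a < cent n h b := by
  have hstep : ∀ {v} {p : T.Walk r v}, p.IsPath → ∀ d ∈ p.darts,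
      cent n h d.snd - cent n h d.fst ∈ Set.Ioo 0 1 := by
    intro v p hp d hd
    rw [cent_sub_cent_mem_Ioo_iff h d.fst_ne_snd, hext, hext d.fst,
      hT.rootDescents_snd_of_mem_darts hp hd]
    ring
  refine ⟨fun a b hab => ?_, fun v p hp => (p.isChain_support_iff_forall_darts _).mpr
    fun d hd => sub_pos.mp (hstep hp d hd).1⟩
  obtain ⟨v, p, hp, d, hd, hde⟩ := hT.exists_isPath_mem_darts r hab
  obtain ⟨h0, h1⟩ := hstep hp d hd
  have hadj : (Gh n h).Adj d.fst d.snd :=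
    ⟨d.fst_ne_snd, abs_sub_lt_iff.mpr ⟨by linarith, by linarith⟩⟩
  rw [← mem_edgeSet, ← hde]
  exact hadj

end IncreasingTree

/-- Every rooted Cayley tree `T` on `{0, …, n}` with root `r` is `h`-increasing for exactly
one `h ∈ ℤ^n` such that `h̄_r` is the minimum of the centroid `h̄` (being `h`-increasing
means: `T ⊆ G_h` and `h̄` strictly increases along every simple path starting at `r`). -/
theorem cayley_tree_unique_h (n : ℕ) (T : SimpleGraph (Fin (n + 1))) (hT : T.IsTree)
    (r : Fin (n + 1)) :
    ∃! h : Fin n → ℤ,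
      (∀ j : Fin (n + 1), cent n h r ≤ cent n h j) ∧ T ≤ Gh n h ∧
        ∀ (v : Fin (n + 1)) (p : T.Walk r v), p.IsPath →
          List.Chain' (fun a b => cent n h a < cent n h b) p.support := by
  set D := hT.rootDescents r
  set h₀ : Fin n → ℤ := fun j => D j.succ - D 0
  have hext₀ : ∀ v, extv h₀ v = extv h₀ r + D v := by
    have hD : ∀ v, extv h₀ v = D v - D 0 :=
      Fin.cases (by simp [extv]) fun j => by simp [extv, h₀]
    intro v
    rw [hD, hD, show D r = 0 from hT.rootDescents_self r]
    ring
  obtain ⟨hsub, hinc⟩ := increasing_of_extv_eq_add_rootDescents hT hext₀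
  refine ⟨h₀, ⟨fun j => ?_, hsub, hinc⟩, ?_⟩
  · obtain ⟨p, hp, -⟩ := hT.existsUnique_path r j
    exact p.le_of_forall_darts_lt _ ((p.isChain_support_iff_forall_darts _).mp (hinc j p hp))
  · rintro h ⟨-, hsub', hinc'⟩
    have hext := extv_eq_add_rootDescents_of_increasing hT hsub' hinc'
    funext j
    have h0 := hext 0
    have hj := hext j.succ
    simp only [extv, Fin.cases_zero, Fin.cases_succ] at h0 hj
    simp only [h₀, D]
    omega
end
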